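/- Let W ⊆ ℂ be open, let ρ : W → ℝ be continuously differentiable and positive, and let g : W → ℂ be twice continuously differentiable. Suppose that for every twice continuously differentiable complex-valued harmonic function U on W (∂²U/∂w̄∂w = 0), the function u = g · U satisfies ∂/∂w̄ ( (1/ρ(w)) ∂u/∂w ) = 0 on W. Then g satisfies ∂g/∂w = 0 on W (g is antiholomorphic) and (∂/∂w̄ (1/ρ)) · g + (1/ρ) · ∂g/∂w̄ = 0 on W. -/

import Mathlib

open Complex

/-- The Wirtinger derivative `∂/∂w` of a function `f : ℂ → ℂ`. -/
noncomputable def wirtingerD (f : ℂ → ℂ) (z : ℂ) : ℂ :=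
  (1 / 2 : ℂ) * (fderiv ℝ f z 1 - Complex.I * fderiv ℝ f z Complex.I)

/-- The conjugate Wirtinger derivative `∂/∂w̄` of a function `f : ℂ → ℂ`. -/
noncomputable def wirtingerDBar (f : ℂ → ℂ) (z : ℂ) : ℂ :=
  (1 / 2 : ℂ) * (fderiv ℝ f z 1 + Complex.I * fderiv ℝ f z Complex.I)

/-!
Test the hypothesis on the harmonic functions `1`, `w̄` and `w`, and write `F = ρ⁻¹ ∂g`.
The choice `U = 1` gives `∂̄F = 0`. By the product rule, `ρ⁻¹ ∂(g w̄) = w̄ F` and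
`ρ⁻¹ ∂(g w) = w F + ρ⁻¹ g`, so the choices `U = w̄` and `U = w` give
`F + w̄ ∂̄F = 0` and `w ∂̄F + ∂̄(ρ⁻¹ g) = 0`. Hence `F = 0`, i.e. `∂g = 0`, and
`∂̄(ρ⁻¹ g) = 0`, which is the second equation after one more product rule.
-/

open ComplexConjugate Filter Topology

section WirtingerCalculus

variable {f h : ℂ → ℂ} {w : ℂ}

theorem Filter.EventuallyEq.wirtingerD_eq (hfh : f =ᶠ[𝓝 w] h) :
    wirtingerD f w = wirtingerD h w := by
  rw [wirtingerD, wirtingerD, hfh.fderiv_eq]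

theorem Filter.EventuallyEq.wirtingerDBar_eq (hfh : f =ᶠ[𝓝 w] h) :
    wirtingerDBar f w = wirtingerDBar h w := by
  rw [wirtingerDBar, wirtingerDBar, hfh.fderiv_eq]

@[simp]
theorem wirtingerD_const (c : ℂ) : wirtingerD (fun _ => c) w = 0 := by
  simp [wirtingerD]

@[simp]
theorem wirtingerDBar_const (c : ℂ) : wirtingerDBar (fun _ => c) w = 0 := by
  simp [wirtingerDBar]

@[simp]
theorem wirtingerD_id : wirtingerD (fun x => x) w = 1 := by
  simp [wirtingerD, ← sq]
  norm_num

@[simp]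
theorem wirtingerDBar_id : wirtingerDBar (fun x => x) w = 0 := by
  simp [wirtingerDBar]

theorem fderiv_conj : fderiv ℝ (fun x => conj x) w = conjCLE.toContinuousLinearMap :=
  conjCLE.fderiv

@[simp]
theorem wirtingerD_conj : wirtingerD (fun x => conj x) w = 0 := by
  simp [wirtingerD, fderiv_conj]

@[simp]
theorem wirtingerDBar_conj : wirtingerDBar (fun x => conj x) w = 1 := by
  simp [wirtingerDBar, fderiv_conj]
  norm_num

theorem wirtingerD_mul (hf : DifferentiableAt ℝ f w) (hh : DifferentiableAt ℝ h w) :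
    wirtingerD (fun x => f x * h x) w = wirtingerD f w * h w + f w * wirtingerD h w := by
  simp only [wirtingerD, fderiv_fun_mul hf hh, add_apply, smul_apply,
    smul_eq_mul]
  ring

theorem wirtingerDBar_mul (hf : DifferentiableAt ℝ f w) (hh : DifferentiableAt ℝ h w) :
    wirtingerDBar (fun x => f x * h x) w
      = wirtingerDBar f w * h w + f w * wirtingerDBar h w := by
  simp only [wirtingerDBar, fderiv_fun_mul hf hh, add_apply, smul_apply,
    smul_eq_mul]
  ring

theorem wirtingerDBar_add (hf : DifferentiableAt ℝ f w) (hh : DifferentiableAt ℝ h w) :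
    wirtingerDBar (fun x => f x + h x) w = wirtingerDBar f w + wirtingerDBar h w := by
  simp only [wirtingerDBar, fderiv_fun_add hf hh, add_apply]
  ring

theorem ContDiffAt.wirtingerD {n : WithTop ℕ∞} (hf : ContDiffAt ℝ (n + 1) f w) :
    ContDiffAt ℝ n (wirtingerD f) w := by
  have hDf := hf.fderiv_right le_rfl
  exact contDiffAt_const.mul ((hDf.clm_apply contDiffAt_const).sub
    (contDiffAt_const.mul (hDf.clm_apply contDiffAt_const)))

end WirtingerCalculus

section WeightedTestFunctions

variable {φ g : ℂ → ℂ} {w : ℂ}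

theorem wirtingerDBar_mul_wirtingerD_mul_conj (hg : ∀ᶠ x in 𝓝 w, DifferentiableAt ℝ g x)
    (hF : DifferentiableAt ℝ (fun x => φ x * wirtingerD g x) w) :
    wirtingerDBar (fun x => φ x * wirtingerD (fun y => g y * conj y) x) w
      = φ w * wirtingerD g w + conj w * wirtingerDBar (fun x => φ x * wirtingerD g x) w := by
  have hconj : Differentiable ℝ (fun x : ℂ => conj x) := differentiable_conj
  have hev : (fun x => φ x * wirtingerD (fun y => g y * conj y) x)
      =ᶠ[𝓝 w] fun x => conj x * (φ x * wirtingerD g x) := by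
    filter_upwards [hg] with x hx
    rw [wirtingerD_mul hx (hconj x), wirtingerD_conj]
    ring
  rw [hev.wirtingerDBar_eq, wirtingerDBar_mul (hconj w) hF, wirtingerDBar_conj, one_mul]

theorem wirtingerDBar_mul_wirtingerD_mul_id (hφ : DifferentiableAt ℝ φ w)
    (hg : ∀ᶠ x in 𝓝 w, DifferentiableAt ℝ g x)
    (hF : DifferentiableAt ℝ (fun x => φ x * wirtingerD g x) w) :
    wirtingerDBar (fun x => φ x * wirtingerD (fun y => g y * y) x) w
      = w * wirtingerDBar (fun x => φ x * wirtingerD g x) w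
        + wirtingerDBar (fun x => φ x * g x) w := by
  have hev : (fun x => φ x * wirtingerD (fun y => g y * y) x)
      =ᶠ[𝓝 w] fun x => x * (φ x * wirtingerD g x) + φ x * g x := by
    filter_upwards [hg] with x hx
    rw [wirtingerD_mul hx differentiableAt_fun_id, wirtingerD_id]
    ring
  rw [hev.wirtingerDBar_eq,
    wirtingerDBar_add (differentiableAt_fun_id.fun_mul hF) (hφ.fun_mul hg.self_of_nhds),
    wirtingerDBar_mul differentiableAt_fun_id hF, wirtingerDBar_id, zero_mul, zero_add]

end WeightedTestFunctions

/-- if for every `C²` complex harmonic function `U` on `W` the function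
`u = g · U` satisfies `∂/∂w̄ ((1/ρ) ∂u/∂w) = 0` on `W`, then `g` is antiholomorphic on
`W` and satisfies `(∂/∂w̄ (1/ρ)) g + (1/ρ) ∂g/∂w̄ = 0` there. -/
theorem system_of_weighted_equation (W : Set ℂ) (hW : IsOpen W)
    (ρ : ℂ → ℝ) (hρ : ContDiffOn ℝ 1 ρ W) (hρpos : ∀ w ∈ W, 0 < ρ w)
    (g : ℂ → ℂ) (hg : ContDiffOn ℝ 2 g W)
    (hmain : ∀ U : ℂ → ℂ, ContDiffOn ℝ 2 U W →
      (∀ w ∈ W, wirtingerDBar (fun x => wirtingerD U x) w = 0) →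
      ∀ w ∈ W,
        wirtingerDBar
          (fun x => (1 / (ρ x : ℂ)) * wirtingerD (fun y => g y * U y) x) w = 0) :
    ∀ w ∈ W, wirtingerD g w = 0 ∧
      wirtingerDBar (fun x => (1 / (ρ x : ℂ))) w * g w +
        (1 / (ρ w : ℂ)) * wirtingerDBar g w = 0 := by
  intro w hw
  have hWw : W ∈ 𝓝 w := hW.mem_nhds hw
  have hρw : (ρ w : ℂ) ≠ 0 := ofReal_ne_zero.mpr (hρpos w hw).ne'
  have hg_diff : ∀ᶠ x in 𝓝 w, DifferentiableAt ℝ g x := by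
    filter_upwards [hW.eventually_mem hw] with x hx
    exact (hg.contDiffAt (hW.mem_nhds hx)).differentiableAt two_ne_zero
  have hρ_inv : DifferentiableAt ℝ (fun x => 1 / (ρ x : ℂ)) w := by
    have hρ_diff : DifferentiableAt ℝ (fun x => (ρ x : ℂ)) w :=
      ofRealCLM.differentiableAt.comp w ((hρ.contDiffAt hWw).differentiableAt one_ne_zero)
    simpa only [one_div] using hρ_diff.fun_inv hρw
  have hF : DifferentiableAt ℝ (fun x => 1 / (ρ x : ℂ) * wirtingerD g x) w :=
    hρ_inv.mul ((hg.contDiffAt hWw).wirtingerD.differentiableAt one_ne_zero)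
  have hF_bar : wirtingerDBar (fun x => 1 / (ρ x : ℂ) * wirtingerD g x) w = 0 := by
    simpa using hmain (fun _ => 1) contDiffOn_const (by simp) w hw
  have hconj := hmain (fun y => conj y) conjCLE.contDiff.contDiffOn (by simp) w hw
  have hid := hmain (fun y => y) contDiffOn_id (by simp) w hw
  rw [wirtingerDBar_mul_wirtingerD_mul_conj hg_diff hF, hF_bar] at hconj
  rw [wirtingerDBar_mul_wirtingerD_mul_id hρ_inv hg_diff hF, hF_bar,
    wirtingerDBar_mul hρ_inv hg_diff.self_of_nhds] at hid
  refine ⟨?_, by simpa [mul_comm] using hid⟩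
  simpa [hρw] using hconj
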